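/- Let Λ = (L, 𝔐, ⊨) be an eviction-compatible satisfaction system (FRsubs(Mod(B) \ M, Λ) ≠ ∅ for all finite B and all M). If a model change operation ⊖ satisfies success (M ∩ Mod(⊖(B,M)) = ∅), inclusion (Mod(⊖(B,M)) ⊆ Mod(B)), and finite retainment (if Mod(⊖(B,M)) ⊊ M' ⊆ Mod(B) \ M then M' ∉ FRsets(Λ)), then Mod(⊖(B,M)) ∈ FRsubs(Mod(B) \ M, Λ) for all finite B ⊆ L and M ⊆ 𝔐. -/

import Mathlib

variable {α β : Type*}

def ModelsOf (sat : β → Set α → Prop) (B : Set α) : Set β := {m | sat m B}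

def FRsets (sat : β → Set α → Prop) : Set (Set β) :=
  {X | ∃ B : Set α, B.Finite ∧ ModelsOf sat B = X}

def FRsubs (sat : β → Set α → Prop) (M : Set β) : Set (Set β) :=
  {X | X ∈ FRsets sat ∧ X ⊆ M ∧ ¬ ∃ Y ∈ FRsets sat, X ⊂ Y ∧ Y ⊆ M}

def FRsups (sat : β → Set α → Prop) (M : Set β) : Set (Set β) :=
  {X | X ∈ FRsets sat ∧ M ⊆ X ∧ ¬ ∃ Y ∈ FRsets sat, M ⊆ Y ∧ Y ⊂ X}

theorem modelsOf_mem_FRsets (sat : β → Set α → Prop) {B : Set α} (hB : B.Finite) :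
    ModelsOf sat B ∈ FRsets sat :=
  ⟨B, hB, rfl⟩

theorem mem_FRsubs_of_forall_notMem (sat : β → Set α → Prop) {X M : Set β}
    (hX : X ∈ FRsets sat) (hXM : X ⊆ M) (hmax : ∀ Y, X ⊂ Y → Y ⊆ M → Y ∉ FRsets sat) :
    X ∈ FRsubs sat M :=
  ⟨hX, hXM, fun ⟨Y, hY, hXY, hYM⟩ => hmax Y hXY hYM hY⟩

theorem stmt10_general (sat : β → Set α → Prop) (f : Set α → Set β → Set α)
    (hfin : ∀ B M, (f B M).Finite)
    (hsucc : ∀ (B : Set α) (M : Set β), B.Finite →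
      M ∩ ModelsOf sat (f B M) = ∅)
    (hincl : ∀ (B : Set α) (M : Set β), B.Finite →
      ModelsOf sat (f B M) ⊆ ModelsOf sat B)
    (hret : ∀ (B : Set α) (M : Set β), B.Finite → ∀ M' : Set β,
      ModelsOf sat (f B M) ⊂ M' → M' ⊆ ModelsOf sat B \ M → M' ∉ FRsets sat) :
    ∀ (B : Set α) (M : Set β), B.Finite →
      ModelsOf sat (f B M) ∈ FRsubs sat (ModelsOf sat B \ M) := fun B M hB =>
  mem_FRsubs_of_forall_notMem sat (modelsOf_mem_FRsets sat (hfin B M))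
    (Set.subset_sdiff.2 ⟨hincl B M hB, (Set.disjoint_iff_inter_eq_empty.2 (hsucc B M hB)).symm⟩)
    (hret B M hB)

theorem stmt10 (sat : β → Set α → Prop) (f : Set α → Set β → Set α)
    (hcompat : ∀ (B : Set α) (M : Set β), B.Finite →
      (FRsubs sat (ModelsOf sat B \ M)).Nonempty)
    (hfin : ∀ B M, (f B M).Finite)
    (hsucc : ∀ (B : Set α) (M : Set β), B.Finite →
      M ∩ ModelsOf sat (f B M) = ∅)
    (hincl : ∀ (B : Set α) (M : Set β), B.Finite →
      ModelsOf sat (f B M) ⊆ ModelsOf sat B)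
    (hret : ∀ (B : Set α) (M : Set β), B.Finite → ∀ M' : Set β,
      ModelsOf sat (f B M) ⊂ M' → M' ⊆ ModelsOf sat B \ M → M' ∉ FRsets sat) :
    ∀ (B : Set α) (M : Set β), B.Finite →
      ModelsOf sat (f B M) ∈ FRsubs sat (ModelsOf sat B \ M) :=
  stmt10_general sat f hfin hsucc hincl hret
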